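/- Define E3 : ℕ → ℕ → ℕ → ℝ → ℝ by E3 a h 0 q = 0; for a > h, E3 a h (n+1) q = max ((h+1)*(1-q) + E3 (a-h-1) 0 n q) (q * E3 (a+1) h n q + (1-q) * (E3 a (h+1) n q - q)); for a ≤ h, E3 a h (n+1) q = max (E3 0 0 n q) (q * E3 (a+1) h n q + (1-q) * (E3 a (h+1) n q - q)). Then for all a h n and q ∈ [0,1], E3 a h n q ≤ (1-q) * a. -/
import Mathlib


noncomputable def E3 : ℕ → ℕ → ℕ → ℝ → ℝ
  | _, _, 0, _ => 0
  | a, h, n + 1, q =>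
    if a > h then
      max (((h : ℝ) + 1) * (1 - q) + E3 (a - h - 1) 0 n q)
        (q * E3 (a + 1) h n q + (1 - q) * (E3 a (h + 1) n q - q))
    else
      max (E3 0 0 n q)
        (q * E3 (a + 1) h n q + (1 - q) * (E3 a (h + 1) n q - q))

theorem E3_le (a h n : ℕ) (q : ℝ) (hq0 : 0 ≤ q) (hq1 : q ≤ 1) :
    E3 a h n q ≤ (1 - q) * a := by
  induction n generalizing a h with
  | zero =>
    simp only [E3]
    have : (0:ℝ) ≤ (a:ℝ) := Nat.cast_nonneg a
    nlinarith
  | succ n ih =>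
    have hp : (0:ℝ) ≤ 1 - q := by linarith
    rw [E3]
    split_ifs with hah
    · apply max_le
      · have hcast : ((a - h - 1 : ℕ) : ℝ) = (a:ℝ) - h - 1 := by
          rw [Nat.sub_sub, Nat.cast_sub (by omega)]
          push_cast; ring
        have h0 := ih (a - h - 1) 0
        rw [hcast] at h0
        nlinarith
      · have h1 := ih (a + 1) h
        have h2 := ih a (h + 1)
        push_cast at h1
        nlinarith
    · apply max_le
      · have h0 := ih 0 0
        simp only [Nat.cast_zero, mul_zero] at h0
        have : (0:ℝ) ≤ (a:ℝ) := Nat.cast_nonneg a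
        nlinarith
      · have h1 := ih (a + 1) h
        have h2 := ih a (h + 1)
        push_cast at h1
        nlinarith
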